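/- arXiv:2206.01501 — 2 statements merged into one kernel-verified Lean document; each statement's English description precedes it below -/
import Mathlib

section
/- For an injective map U on {0,1}^n × {0,1}^m with blank initial tape y₀ = 0^m and X uniform on {0,1}^n, and any k > 0, the probability that the number of leading zeros of the first output component exceeds f + k, while the number of used cells (position of last 1) of the second output component is at most f, is at most 2^(−k). -/
/-!
A reversible machine cannot compress: `x ↦ U (x, 0)` is injective, so the inputs producing
an outcome are at most as many as the possible outcomes. An output with more than `f + k`
leading zeros on the first tape and at most `f` used cells on the second is determined by
at most `n - (f + k + 1)` bits of the first tape and `f + 1` bits of the second, hence there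
are at most `2 ^ (n - k)` of them among the `2 ^ n` equally likely inputs.
-/

/-- Number of leading zeros of a string: the largest `j` such that all bits at
positions `< j` are `false`. -/
def leadingZeros {n : ℕ} (z : Fin n → Bool) : ℕ :=
  Nat.findGreatest (fun j => ∀ i : Fin n, (i : ℕ) < j → z i = false) n

/-- Number of used cells: the largest index carrying a `1` (or `0` if none). -/
def usedCells {m : ℕ} (y : Fin m → Bool) : ℕ :=
  (Finset.univ.filter (fun i : Fin m => y i = true)).sup (fun i => (i : ℕ))

open Finset

theorem card_le_of_forall_notMem_eq {ι β : Type*} [Fintype ι] [Fintype β] (t : Finset ι) (b : β)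
    {s : Finset (ι → β)} (hs : ∀ z ∈ s, ∀ i ∉ t, z i = b) : #s ≤ Fintype.card β ^ #t := by
  classical
  calc #s ≤ #(univ : Finset (t → β)) := by
        refine card_le_card_of_injOn (fun z i => z i) (fun _ _ => mem_univ _) ?_
        intro z₁ h₁ z₂ h₂ hz
        funext i
        by_cases hi : i ∈ t
        · exact congrFun hz ⟨i, hi⟩
        · rw [hs z₁ h₁ i hi, hs z₂ h₂ i hi]
    _ = Fintype.card β ^ #t := by simp

theorem leadingZeros_le {n : ℕ} (z : Fin n → Bool) : leadingZeros z ≤ n :=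
  Nat.findGreatest_le n

theorem eq_false_of_lt_leadingZeros {n : ℕ} {z : Fin n → Bool} {i : Fin n}
    (hi : (i : ℕ) < leadingZeros z) : z i = false :=
  Nat.findGreatest_spec (P := fun j => ∀ i : Fin n, (i : ℕ) < j → z i = false)
    (Nat.zero_le n) (fun _ h => absurd h (Nat.not_lt_zero _)) i hi

theorem card_lt_leadingZeros_mul_le (n j : ℕ) :
    #{z : Fin n → Bool | j < leadingZeros z} * 2 ^ (j + 1) ≤ 2 ^ n := by
  by_cases hjn : j < n
  · let a : Fin n := ⟨j, hjn⟩
    have hcard : #{z : Fin n → Bool | j < leadingZeros z} ≤ 2 ^ (n - 1 - j) := by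
      rw [← Fin.card_Ioi a, ← Fintype.card_bool]
      refine card_le_of_forall_notMem_eq (Ioi a) false fun z hz i hi => ?_
      rw [mem_filter] at hz
      rw [mem_Ioi, not_lt] at hi
      exact eq_false_of_lt_leadingZeros (lt_of_le_of_lt hi hz.2)
    calc #{z : Fin n → Bool | j < leadingZeros z} * 2 ^ (j + 1)
        ≤ 2 ^ (n - 1 - j) * 2 ^ (j + 1) := Nat.mul_le_mul_right _ hcard
      _ = 2 ^ n := by rw [← pow_add]; congr 1; omega
  · have hempty : ({z | j < leadingZeros z} : Finset (Fin n → Bool)) = ∅ :=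
      filter_false_of_mem fun z _ => by have := leadingZeros_le z; omega
    simp [hempty]

theorem usedCells_le_iff {m : ℕ} {y : Fin m → Bool} {f : ℕ} :
    usedCells y ≤ f ↔ ∀ i, y i = true → (i : ℕ) ≤ f := by
  simp [usedCells]

theorem card_usedCells_le (m f : ℕ) : #{y : Fin m → Bool | usedCells y ≤ f} ≤ 2 ^ (f + 1) := by
  let t : Finset (Fin m) := {i | (i : ℕ) ≤ f}
  have ht : #t ≤ f + 1 := by
    simpa using card_le_card_of_injOn (t := range (f + 1)) Fin.val
      (fun i hi => by simpa [t, Nat.lt_succ_iff] using hi) Fin.val_injective.injOn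
  calc #{y : Fin m → Bool | usedCells y ≤ f}
      ≤ Fintype.card Bool ^ #t := by
        refine card_le_of_forall_notMem_eq t false fun y hy i hi => ?_
        rw [mem_filter, usedCells_le_iff] at hy
        simpa [t] using mt (hy.2 i) (by simpa [t] using hi)
    _ ≤ 2 ^ (f + 1) := by rw [Fintype.card_bool]; exact Nat.pow_le_pow_right two_pos ht

theorem card_proofOfWork_mul_le {n m : ℕ} (f k : ℕ)
    (U : (Fin n → Bool) × (Fin m → Bool) → (Fin n → Bool) × (Fin m → Bool))
    (hU : Function.Injective U) :
    #{x : Fin n → Bool | f + k < leadingZeros (U (x, fun _ => false)).1 ∧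
        usedCells (U (x, fun _ => false)).2 ≤ f} * 2 ^ k ≤ 2 ^ n := by
  set S : Finset (Fin n → Bool) := {x | f + k < leadingZeros (U (x, fun _ => false)).1 ∧
    usedCells (U (x, fun _ => false)).2 ≤ f}
  set A : Finset (Fin n → Bool) := {z | f + k < leadingZeros z}
  set B : Finset (Fin m → Bool) := {y | usedCells y ≤ f}
  have hSAB : #S ≤ #A * #B := by
    rw [← card_product]
    refine card_le_card_of_injOn (fun x => U (x, fun _ => false)) ?_ ?_
    · intro x hx
      simpa [S, A, B] using hx
    · exact fun x₁ _ x₂ _ h => (Prod.mk.inj (hU h)).1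
  have hA := card_lt_leadingZeros_mul_le n (f + k)
  have hB := card_usedCells_le m f
  have hmul : #S * 2 ^ k * 2 ^ (f + 1) ≤ 2 ^ n * 2 ^ (f + 1) :=
    calc #S * 2 ^ k * 2 ^ (f + 1) = #S * 2 ^ (f + k + 1) := by ring
      _ ≤ #A * 2 ^ (f + k + 1) * #B := by
        rw [mul_right_comm]; exact Nat.mul_le_mul_right _ hSAB
      _ ≤ 2 ^ n * 2 ^ (f + 1) := Nat.mul_le_mul hA hB
  exact Nat.le_of_mul_le_mul_right hmul (by positivity)

theorem landauer_principle_finite_general (n m f k : ℕ)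
    (U : (Fin n → Bool) × (Fin m → Bool) → (Fin n → Bool) × (Fin m → Bool))
    (hU : Function.Injective U) :
    ((Finset.univ.filter (fun x : Fin n → Bool =>
        f + k < leadingZeros (U (x, fun _ => false)).1 ∧
        usedCells (U (x, fun _ => false)).2 ≤ f)).card : ℝ) / 2 ^ n
      ≤ (2 : ℝ) ^ (-(k : ℤ)) := by
  rw [zpow_neg, zpow_natCast, div_le_iff₀ (by positivity), ← div_eq_inv_mul,
    le_div_iff₀ (by positivity)]
  exact_mod_cast card_proofOfWork_mul_le f k U hU

theorem landauer_principle_finite (n m f k : ℕ) (hk : 0 < k)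
    (U : (Fin n → Bool) × (Fin m → Bool) → (Fin n → Bool) × (Fin m → Bool))
    (hU : Function.Injective U) :
    ((Finset.univ.filter (fun x : Fin n → Bool =>
        f + k < leadingZeros (U (x, fun _ => false)).1 ∧
        usedCells (U (x, fun _ => false)).2 ≤ f)).card : ℝ) / 2 ^ n
      ≤ (2 : ℝ) ^ (-(k : ℤ)) :=
  landauer_principle_finite_general n m f k U hU
end

section
/- Leftover hash lemma: Let H be a 2-universal family of hash functions from a finite type X to {0,1}^m, and let X be a random variable with min-entropy H_∞(X) ≥ m + 2ε. Let S be uniform on H, independent of X. Then the total variation distance between the joint distribution of (S(X), S) and the product of the uniform distribution on {0,1}^m with the distribution of S is at most 2^(−ε). -/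
/-!
Write `q_h` for the distribution of `h(X)` and `N = 2^m`. Expanding `∑_y q_h(y)^2` as a sum over
pairs `(x₁, x₂)` and averaging over `h`, 2-universality bounds the collision probability of `S(X)`
by `1/N + ∑_x p(x)^2 ≤ 1/N + 2^(-m-2ε)`. Since `∑_y (q_h(y) - 1/N)^2 = ∑_y q_h(y)^2 - 1/N`, the
average squared ℓ²-distance from uniform is at most `2^(-m-2ε)`, and Cauchy–Schwarz over the
`N·|H|` outcomes turns this into an ℓ¹ bound of `2^(-ε)`.
-/

open Finset

section HashFamilies

variable {σ τ : Type*}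

lemma sq_sum_sum_le_card_mul_sum_sum_sq {ι κ : Type*} (s : Finset ι) (t : Finset κ)
    (f : ι → κ → ℝ) :
    (∑ i ∈ s, ∑ j ∈ t, f i j) ^ 2 ≤ #s * #t * ∑ i ∈ s, ∑ j ∈ t, f i j ^ 2 := by
  simpa [← sum_product', card_product] using
    sq_sum_le_card_mul_sum_sq (s := s ×ˢ t) (f := fun z => f z.1 z.2)

lemma sum_sq_le_of_forall_le [Fintype σ] {p : σ → ℝ} {b : ℝ} (hp : ∀ x, 0 ≤ p x)
    (hp1 : ∑ x, p x = 1) (hb : ∀ x, p x ≤ b) : ∑ x, p x ^ 2 ≤ b :=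
  calc ∑ x, p x ^ 2 ≤ ∑ x, p x * b := sum_le_sum fun x _ => by
        rw [sq]; exact mul_le_mul_of_nonneg_left (hb x) (hp x)
    _ = b := by rw [← sum_mul, hp1, one_mul]

lemma sum_sub_inv_card_sq [Fintype τ] {q : τ → ℝ} (hq : ∑ y, q y = 1) :
    ∑ y, (q y - (Fintype.card τ : ℝ)⁻¹) ^ 2 = ∑ y, q y ^ 2 - (Fintype.card τ : ℝ)⁻¹ := by
  have : Nonempty τ := by
    by_contra hτ
    simp [not_nonempty_iff.mp hτ] at hq
  have hN : (Fintype.card τ : ℝ) ≠ 0 := by positivity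
  simp only [sub_sq, sum_add_distrib, sum_sub_distrib, ← sum_mul, ← mul_sum, hq, sum_const,
    card_univ, nsmul_eq_mul]
  field_simp
  ring

def pushforward [Fintype σ] [DecidableEq τ] (h : σ → τ) (p : σ → ℝ) (y : τ) : ℝ :=
  ∑ x ∈ univ.filter (fun x => h x = y), p x

def IsUniversalHashFamily [Fintype τ] [DecidableEq τ] (H : Finset (σ → τ)) : Prop :=
  ∀ x₁ x₂ : σ, x₁ ≠ x₂ →
    (#(H.filter fun h => h x₁ = h x₂) : ℝ) / #H ≤ (Fintype.card τ : ℝ)⁻¹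

lemma IsUniversalHashFamily.card_filter_le [Fintype τ] [DecidableEq τ] [DecidableEq σ]
    {H : Finset (σ → τ)} (hH : IsUniversalHashFamily H) (x₁ x₂ : σ) :
    (#(H.filter fun h => h x₁ = h x₂) : ℝ)
      ≤ #H * (Fintype.card τ : ℝ)⁻¹ + if x₁ = x₂ then (#H : ℝ) else 0 := by
  split_ifs with hx
  · have : (#(H.filter fun h => h x₁ = h x₂) : ℝ) ≤ #H := by
      exact_mod_cast Finset.card_filter_le _ _
    linarith [show (0 : ℝ) ≤ #H * (Fintype.card τ : ℝ)⁻¹ by positivity]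
  · obtain hK | hK := (#H).eq_zero_or_pos
    · simp [card_eq_zero.mp hK]
    · have := hH x₁ x₂ hx
      rw [div_le_iff₀ (by exact_mod_cast hK)] at this
      linarith

section Pushforward

variable [Fintype σ] [Fintype τ] [DecidableEq τ]

lemma sum_pushforward (h : σ → τ) (p : σ → ℝ) : ∑ y, pushforward h p y = ∑ x, p x :=
  sum_fiberwise univ h p

lemma sum_pushforward_sq (h : σ → τ) (p : σ → ℝ) :
    ∑ y, pushforward h p y ^ 2 = ∑ x₁, ∑ x₂, if h x₁ = h x₂ then p x₁ * p x₂ else 0 := by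
  simp only [pushforward, sum_filter, sq, sum_mul_sum]
  rw [sum_comm]
  refine sum_congr rfl fun x₁ _ => ?_
  rw [sum_comm]
  refine sum_congr rfl fun x₂ _ => ?_
  simp [ite_mul, mul_ite, eq_comm]

lemma sum_sum_pushforward_sq (H : Finset (σ → τ)) (p : σ → ℝ) :
    ∑ h ∈ H, ∑ y, pushforward h p y ^ 2
      = ∑ x₁, ∑ x₂, p x₁ * p x₂ * #(H.filter fun h => h x₁ = h x₂) := by
  simp only [sum_pushforward_sq]
  rw [sum_comm]
  refine sum_congr rfl fun x₁ _ => ?_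
  rw [sum_comm]
  refine sum_congr rfl fun x₂ _ => ?_
  rw [← sum_filter, sum_const, nsmul_eq_mul, mul_comm]

variable {H : Finset (σ → τ)} {p : σ → ℝ}

lemma IsUniversalHashFamily.sum_sum_pushforward_sq_le (hH : IsUniversalHashFamily H)
    (hp : ∀ x, 0 ≤ p x) (hp1 : ∑ x, p x = 1) :
    ∑ h ∈ H, ∑ y, pushforward h p y ^ 2 ≤ #H * ((Fintype.card τ : ℝ)⁻¹ + ∑ x, p x ^ 2) := by
  classical
  set c : ℝ := #H * (Fintype.card τ : ℝ)⁻¹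
  calc ∑ h ∈ H, ∑ y, pushforward h p y ^ 2
      ≤ ∑ x₁, ∑ x₂, (p x₁ * p x₂ * c + if x₁ = x₂ then p x₁ * p x₂ * #H else 0) := by
        rw [sum_sum_pushforward_sq]
        refine sum_le_sum fun x₁ _ => sum_le_sum fun x₂ _ => ?_
        have := mul_le_mul_of_nonneg_left (hH.card_filter_le x₁ x₂)
          (mul_nonneg (hp x₁) (hp x₂))
        split_ifs at this ⊢ <;> linarith
    _ = (∑ x, p x) ^ 2 * c + #H * ∑ x, p x ^ 2 := by
        simp only [sum_add_distrib, sum_ite_eq, mem_univ, if_true, sq, sum_mul, mul_sum]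
        rw [sum_comm]
        exact congrArg _ (sum_congr rfl fun x _ => by ring)
    _ = _ := by rw [hp1]; ring

lemma IsUniversalHashFamily.sum_sum_pushforward_sub_sq_le (hH : IsUniversalHashFamily H)
    (hp : ∀ x, 0 ≤ p x) (hp1 : ∑ x, p x = 1) :
    ∑ h ∈ H, ∑ y, (pushforward h p y - (Fintype.card τ : ℝ)⁻¹) ^ 2 ≤ #H * ∑ x, p x ^ 2 :=
  calc ∑ h ∈ H, ∑ y, (pushforward h p y - (Fintype.card τ : ℝ)⁻¹) ^ 2
      = ∑ h ∈ H, ∑ y, pushforward h p y ^ 2 - #H * (Fintype.card τ : ℝ)⁻¹ := by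
        rw [sum_congr rfl fun h _ => sum_sub_inv_card_sq ((sum_pushforward h p).trans hp1),
          sum_sub_distrib, sum_const, nsmul_eq_mul]
    _ ≤ #H * ((Fintype.card τ : ℝ)⁻¹ + ∑ x, p x ^ 2) - #H * (Fintype.card τ : ℝ)⁻¹ := by
        gcongr; exact hH.sum_sum_pushforward_sq_le hp hp1
    _ = #H * ∑ x, p x ^ 2 := by ring

lemma IsUniversalHashFamily.sum_sum_abs_pushforward_sub_le (hH : IsUniversalHashFamily H)
    (hp : ∀ x, 0 ≤ p x) (hp1 : ∑ x, p x = 1) {δ : ℝ} (hδ : 0 ≤ δ)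
    (hcoll : Fintype.card τ * ∑ x, p x ^ 2 ≤ δ ^ 2) :
    ∑ h ∈ H, ∑ y, |pushforward h p y - (Fintype.card τ : ℝ)⁻¹| ≤ #H * δ := by
  refine le_of_sq_le_sq ?_ (by positivity)
  calc (∑ h ∈ H, ∑ y, |pushforward h p y - (Fintype.card τ : ℝ)⁻¹|) ^ 2
      ≤ #H * Fintype.card τ * ∑ h ∈ H, ∑ y, (pushforward h p y - (Fintype.card τ : ℝ)⁻¹) ^ 2 := by
        simpa only [sq_abs, card_univ] using sq_sum_sum_le_card_mul_sum_sum_sq H univ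
          fun h y => |pushforward h p y - (Fintype.card τ : ℝ)⁻¹|
    _ ≤ #H * Fintype.card τ * (#H * ∑ x, p x ^ 2) := by
        gcongr; exact hH.sum_sum_pushforward_sub_sq_le hp hp1
    _ = #H ^ 2 * (Fintype.card τ * ∑ x, p x ^ 2) := by ring
    _ ≤ (#H * δ) ^ 2 := by rw [mul_pow]; gcongr

end Pushforward

end HashFamilies

theorem leftover_hash_lemma_general {σ : Type*} [Fintype σ] (m : ℕ) (ε : ℝ)
    (𝓗 : Finset (σ → (Fin m → Bool)))
    (huniv : ∀ x₁ x₂ : σ, x₁ ≠ x₂ →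
        ((𝓗.filter (fun h => h x₁ = h x₂)).card : ℝ) / 𝓗.card ≤ (2 : ℝ) ^ (-(m : ℤ)))
    (p : σ → ℝ) (hp : ∀ x, 0 ≤ p x) (hp1 : ∑ x, p x = 1)
    (hmin : ∀ x, p x ≤ (2 : ℝ) ^ (-((m : ℝ) + 2 * ε))) :
    ((1 : ℝ) / 2) * ∑ y : Fin m → Bool, ∑ h ∈ 𝓗,
        |((1 : ℝ) / 𝓗.card) * (∑ x ∈ univ.filter (fun x => h x = y), p x)
          - (2 : ℝ) ^ (-(m : ℤ)) * ((1 : ℝ) / 𝓗.card)|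
      ≤ (2 : ℝ) ^ (-ε) := by
  set N : ℝ := (Fintype.card (Fin m → Bool) : ℝ)
  have hN : N = 2 ^ m := by simp [N]
  have hinv : (2 : ℝ) ^ (-(m : ℤ)) = N⁻¹ := by rw [hN, zpow_neg, zpow_natCast]
  rw [hinv] at huniv ⊢
  have hcoll : N * ∑ x, p x ^ 2 ≤ ((2 : ℝ) ^ (-ε)) ^ 2 :=
    calc N * ∑ x, p x ^ 2 ≤ 2 ^ m * (2 : ℝ) ^ (-((m : ℝ) + 2 * ε)) := by
          rw [hN]; gcongr; exact sum_sq_le_of_forall_le hp hp1 hmin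
      _ = ((2 : ℝ) ^ (-ε)) ^ 2 := by
          rw [← Real.rpow_natCast (2 ^ (-ε)), ← Real.rpow_mul zero_le_two,
            ← Real.rpow_natCast 2 m, ← Real.rpow_add two_pos]
          ring_nf
  have hL1 := IsUniversalHashFamily.sum_sum_abs_pushforward_sub_le huniv hp hp1
    (by positivity) hcoll
  have hterm : ∀ (h : σ → Fin m → Bool) (y : Fin m → Bool),
      |1 / (#𝓗 : ℝ) * pushforward h p y - N⁻¹ * (1 / #𝓗)|
        = 1 / #𝓗 * |pushforward h p y - N⁻¹| := fun h y => by
    rw [mul_comm _ (1 / _ : ℝ), ← mul_sub, abs_mul, abs_of_nonneg (by positivity)]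
  calc (1 : ℝ) / 2 * ∑ y, ∑ h ∈ 𝓗, |1 / (#𝓗 : ℝ) * pushforward h p y - N⁻¹ * (1 / #𝓗)|
      = 1 / 2 * (1 / #𝓗 * ∑ h ∈ 𝓗, ∑ y, |pushforward h p y - N⁻¹|) := by
        simp only [hterm, ← mul_sum]
        rw [sum_comm]
    _ ≤ 1 / 2 * (1 / #𝓗 * (#𝓗 * (2 : ℝ) ^ (-ε))) := by gcongr
    _ ≤ (2 : ℝ) ^ (-ε) := by
        have : 1 / (#𝓗 : ℝ) * #𝓗 ≤ 1 := by
          rcases eq_or_ne (#𝓗 : ℝ) 0 with hK | hK <;> simp [hK]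
        have : 0 < (2 : ℝ) ^ (-ε) := by positivity
        nlinarith

/-- Leftover hash lemma. `p` is the distribution of the source `X` on `σ`,
`𝓗` a 2-universal family of hash functions `σ → {0,1}^m`, and `S` is uniform
on `𝓗`.  The joint distribution of `(S(X), S)` is `ε`-close in total variation
to uniform-times-`S`. -/
theorem leftover_hash_lemma {σ : Type*} [Fintype σ] (m : ℕ) (ε : ℝ)
    (𝓗 : Finset (σ → (Fin m → Bool))) (h𝓗 : 𝓗.Nonempty)
    (huniv : ∀ x₁ x₂ : σ, x₁ ≠ x₂ →
        ((𝓗.filter (fun h => h x₁ = h x₂)).card : ℝ) / 𝓗.card ≤ (2 : ℝ) ^ (-(m : ℤ)))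
    (p : σ → ℝ) (hp : ∀ x, 0 ≤ p x) (hp1 : ∑ x, p x = 1)
    (hmin : ∀ x, p x ≤ (2 : ℝ) ^ (-((m : ℝ) + 2 * ε))) :
    ((1 : ℝ) / 2) * ∑ y : Fin m → Bool, ∑ h ∈ 𝓗,
        |((1 : ℝ) / 𝓗.card) * (∑ x ∈ univ.filter (fun x => h x = y), p x)
          - (2 : ℝ) ^ (-(m : ℤ)) * ((1 : ℝ) / 𝓗.card)|
      ≤ (2 : ℝ) ^ (-ε) :=
  leftover_hash_lemma_general m ε 𝓗 huniv p hp hp1 hmin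
end
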